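/- arXiv:2405.07618 — 2 statements merged into one kernel-verified Lean document; each statement's English description precedes it below -/
import Mathlib

section
/- For every point a in the tube domain T_B, one has |ρ(𝐢, a)| ≥ 1/2, where 𝐢 = (0', i) ∈ T_B. -/
/- We model ℂ^(n+1) (the paper's ℂⁿ with n := n+1) as (Fin n → ℂ) × ℂ,
   writing z = (z', z_n).  All occurrences of the paper's dimension `n`
   therefore become `n + 1` below. -/

noncomputable section

open MeasureTheory Complex Set

/-- The ambient space ℂ^(n+1), split as (z', z_n). -/
abbrev TubeC (n : ℕ) := (Fin n → ℂ) × ℂ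

/-- ρ(z,w) = (1/4)((z'-conj w')·(z'-conj w') - 2i(z_n - conj w_n)). -/
def rhoK {n : ℕ} (z w : TubeC n) : ℂ :=
  (1/4 : ℂ) * ((∑ j, (z.1 j - (starRingEnd ℂ) (w.1 j)) ^ 2)
    - 2 * Complex.I * (z.2 - (starRingEnd ℂ) w.2))

/-- ρ(z) = Im z_n - |Im z'|². -/
def rhoR {n : ℕ} (z : TubeC n) : ℝ := z.2.im - ∑ j, (z.1 j).im ^ 2

/-- The tube domain T_B. -/
def TB (n : ℕ) : Set (TubeC n) := {z | ∑ j, (z.1 j).im ^ 2 < z.2.im}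

/-- Inverse hyperbolic tangent. -/
def artanh (x : ℝ) : ℝ := (1/2) * Real.log ((1 + x) / (1 - x))

/-- The Bergman distance on T_B. -/
def betaB {n : ℕ} (z w : TubeC n) : ℝ :=
  artanh (Real.sqrt (1 - rhoR z * rhoR w / ‖rhoK z w‖ ^ 2))

/-- The Bergman metric ball D(z,r). -/
def DB {n : ℕ} (z : TubeC n) (r : ℝ) : Set (TubeC n) := {w ∈ TB n | betaB z w < r}

/-- Euclidean norm of a point of ℂ^(n+1). -/
def euclidNorm {n : ℕ} (z : TubeC n) : ℝ :=
  Real.sqrt ((∑ j, ‖z.1 j‖ ^ 2) + ‖z.2‖ ^ 2)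

/-- The point 𝐢 = (0', i). -/
def iPt (n : ℕ) : TubeC n := (0, Complex.I)

/-! Writing `z = x + iy`, `w = u + iv`, one has
`4 Re ρ(z,w) = |x' - u'|² + |y' - v'|² + 2 (ρ(z) + ρ(w))`, so `Re ρ(z,w) ≥ (ρ(z) + ρ(w)) / 2`.
Since `ρ(𝐢) = 1` and `ρ(a) > 0` on `T_B`, this gives `|ρ(𝐢,a)| ≥ Re ρ(𝐢,a) > 1/2`. -/

theorem Complex.re_sq_sub_conj (u v : ℂ) :
    ((u - (starRingEnd ℂ) v) ^ 2).re
      = (u.re - v.re) ^ 2 + (u.im - v.im) ^ 2 - 2 * (u.im ^ 2 + v.im ^ 2) := by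
  simp only [sq, mul_re, sub_re, sub_im, conj_re, conj_im]
  ring

theorem four_mul_re_rhoK {n : ℕ} (z w : TubeC n) :
    4 * (rhoK z w).re = ∑ j, ((z.1 j).re - (w.1 j).re) ^ 2
      + ∑ j, ((z.1 j).im - (w.1 j).im) ^ 2 + 2 * (rhoR z + rhoR w) := by
  simp only [rhoK, rhoR, mul_re, sub_re, sub_im, mul_im, re_sum, conj_re, conj_im, I_re, I_im,
    Complex.re_sq_sub_conj, Finset.sum_sub_distrib, Finset.sum_add_distrib, ← Finset.mul_sum]
  norm_num
  ring

theorem rhoR_add_rhoR_le_two_mul_re_rhoK {n : ℕ} (z w : TubeC n) :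
    rhoR z + rhoR w ≤ 2 * (rhoK z w).re := by
  have hx : 0 ≤ ∑ j, ((z.1 j).re - (w.1 j).re) ^ 2 := by positivity
  have hy : 0 ≤ ∑ j, ((z.1 j).im - (w.1 j).im) ^ 2 := by positivity
  linarith [four_mul_re_rhoK z w]

theorem rhoR_pos_of_mem_TB {n : ℕ} {z : TubeC n} (hz : z ∈ TB n) : 0 < rhoR z :=
  sub_pos.mpr hz

theorem rhoR_iPt (n : ℕ) : rhoR (iPt n) = 1 := by
  simp [rhoR, iPt]

/-- |ρ(𝐢, a)| ≥ 1/2 for every a ∈ T_B. -/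
theorem stmt_3 (n : ℕ) (a : TubeC n) (ha : a ∈ TB n) :
    (1 : ℝ) / 2 ≤ ‖rhoK (iPt n) a‖ := by
  have hre : rhoR (iPt n) + rhoR a ≤ 2 * (rhoK (iPt n) a).re :=
    rhoR_add_rhoR_le_two_mul_re_rhoK (iPt n) a
  rw [rhoR_iPt] at hre
  linarith [rhoR_pos_of_mem_TB ha, re_le_norm (rhoK (iPt n) a)]
end
end

section
/- For any r > 0 there exists a constant C ≥ 1 such that for all z, u, v ∈ T_B with β(u,v) < r one has C⁻¹ |ρ(z,v)| ≤ |ρ(z,u)| ≤ C |ρ(z,v)|, where β is the Bergman distance on T_B. -/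
/- We model ℂ^(n+1) (the paper's ℂⁿ with n := n+1) as (Fin n → ℂ) × ℂ,
   writing z = (z', z_n).  All occurrences of the paper's dimension `n`
   therefore become `n + 1` below. -/

noncomputable section

open MeasureTheory Complex Set

/-! The kernel satisfies the three-point identity
`ρ(z,u) = ρ(z,v) + ρ(v,u) - ρ(v) + ½ ∑ⱼ (zⱼ - vⱼ)(v̄ⱼ - ūⱼ)`, and
`Re ρ(z,w) = ¼ |z' - w'|² + ½ (ρ(z) + ρ(w))` bounds both `ρ(v) ≤ 2 |ρ(z,v)|` and, through
Cauchy–Schwarz, the last sum by `|ρ(z,v)| + |ρ(v,u)|`. The condition `β(u,v) < r` says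
`|ρ(u,v)|² < cosh² r · ρ(u) ρ(v)`, which together with `ρ(u) ≤ 2 |ρ(u,v)|` gives
`|ρ(v,u)| ≤ 2 cosh² r · ρ(v)`. Hence `|ρ(z,u)| ≤ (4 + 8 cosh² r) |ρ(z,v)|`; the other
inequality follows by symmetry of `β`. -/

open ComplexConjugate

lemma conj_rhoK {n : ℕ} (z w : TubeC n) : conj (rhoK z w) = rhoK w z := by
  simp only [rhoK, map_mul, map_sub, map_sum, map_pow, map_div₀, map_one, map_ofNat,
    Complex.conj_I, Complex.conj_conj, sub_sq_comm (conj (z.1 _))]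
  ring

lemma norm_rhoK_comm {n : ℕ} (z w : TubeC n) : ‖rhoK z w‖ = ‖rhoK w z‖ := by
  rw [← conj_rhoK, Complex.norm_conj]

lemma re_rhoK {n : ℕ} (z w : TubeC n) :
    (rhoK z w).re = (∑ j, ‖z.1 j - w.1 j‖ ^ 2) / 4 + (rhoR z + rhoR w) / 2 := by
  have hterm : ∀ j, ((z.1 j - conj (w.1 j)) ^ 2).re
      = ‖z.1 j - w.1 j‖ ^ 2 - 2 * (z.1 j).im ^ 2 - 2 * (w.1 j).im ^ 2 := fun j => by
    rw [Complex.sq_norm, Complex.normSq_apply]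
    simp only [pow_two, Complex.mul_re, Complex.sub_re, Complex.sub_im, Complex.conj_re,
      Complex.conj_im]
    ring
  rw [rhoK, show (1/4 : ℂ) = ((1/4 : ℝ) : ℂ) by norm_num, Complex.re_ofReal_mul]
  simp only [rhoR, Complex.mul_re, Complex.mul_im, Complex.sub_re, Complex.sub_im, Complex.re_sum,
    hterm, Finset.sum_sub_distrib, ← Finset.mul_sum, Complex.re_ofNat, Complex.im_ofNat,
    Complex.I_re, Complex.I_im, Complex.conj_re, Complex.conj_im]
  ring

lemma rhoK_three_point {n : ℕ} (z u v : TubeC n) :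
    rhoK z u = rhoK z v + rhoK v u - (rhoR v : ℂ)
      + (1/2) * ∑ j, (z.1 j - v.1 j) * (conj (v.1 j) - conj (u.1 j)) := by
  have hconj : ∀ x : ℂ, conj x = x - 2 * x.im * Complex.I := fun x =>
    Complex.ext (by simp) (by simp; ring)
  have hterm : ∀ j, (z.1 j - conj (u.1 j)) ^ 2
      = (z.1 j - conj (v.1 j)) ^ 2 + (v.1 j - conj (u.1 j)) ^ 2 + 4 * ((v.1 j).im : ℂ) ^ 2
        + 2 * ((z.1 j - v.1 j) * (conj (v.1 j) - conj (u.1 j))) := fun j => by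
    rw [hconj (v.1 j)]
    linear_combination (-4 * ((v.1 j).im : ℂ) ^ 2) * Complex.I_sq
  simp only [rhoK, rhoR, hterm, Finset.sum_add_distrib, ← Finset.mul_sum, hconj v.2]
  push_cast
  linear_combination (v.2.im : ℂ) * Complex.I_sq

section Tube

variable {n : ℕ} {z u v w : TubeC n}

lemma rhoR_pos (hz : z ∈ TB n) : 0 < rhoR z := sub_pos.mpr hz

lemma rhoR_le_two_mul_norm_rhoK (z : TubeC n) (hw : w ∈ TB n) : rhoR z ≤ 2 * ‖rhoK z w‖ := by
  have hsum : 0 ≤ ∑ j, ‖z.1 j - w.1 j‖ ^ 2 := by positivity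
  have := re_rhoK z w
  linarith [Complex.re_le_norm (rhoK z w), rhoR_pos hw]

lemma sum_norm_sub_sq_le (hz : z ∈ TB n) (hw : w ∈ TB n) :
    ∑ j, ‖z.1 j - w.1 j‖ ^ 2 ≤ 4 * ‖rhoK z w‖ := by
  have := re_rhoK z w
  linarith [Complex.re_le_norm (rhoK z w), rhoR_pos hz, rhoR_pos hw]

lemma rhoR_mul_rhoR_le_sq_norm_rhoK (hz : z ∈ TB n) (hw : w ∈ TB n) :
    rhoR z * rhoR w ≤ ‖rhoK z w‖ ^ 2 := by
  have hsum : 0 ≤ ∑ j, ‖z.1 j - w.1 j‖ ^ 2 := by positivity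
  have := re_rhoK z w
  nlinarith [Complex.re_le_norm (rhoK z w), rhoR_pos hz, rhoR_pos hw, sq_nonneg (rhoR z - rhoR w)]

lemma norm_cross_term_le (hz : z ∈ TB n) (hu : u ∈ TB n) (hv : v ∈ TB n) :
    ‖(1/2 : ℂ) * ∑ j, (z.1 j - v.1 j) * (conj (v.1 j) - conj (u.1 j))‖
      ≤ ‖rhoK z v‖ + ‖rhoK v u‖ := by
  set S := ∑ j, ‖z.1 j - v.1 j‖ * ‖v.1 j - u.1 j‖
  have hsum : ‖∑ j, (z.1 j - v.1 j) * (conj (v.1 j) - conj (u.1 j))‖ ≤ S := by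
    refine (norm_sum_le _ _).trans_eq (Finset.sum_congr rfl fun j _ => ?_)
    rw [norm_mul, ← map_sub, Complex.norm_conj]
  have hCS : S ^ 2 ≤ (∑ j, ‖z.1 j - v.1 j‖ ^ 2) * ∑ j, ‖v.1 j - u.1 j‖ ^ 2 :=
    Finset.sum_mul_sq_le_sq_mul_sq _ _ _
  have hS : S ≤ 2 * (‖rhoK z v‖ + ‖rhoK v u‖) := by
    have h₁ := sum_norm_sub_sq_le hz hv
    have h₂ := sum_norm_sub_sq_le hv hu
    have hS₀ : 0 ≤ S := by positivity
    nlinarith [sq_nonneg (‖rhoK z v‖ - ‖rhoK v u‖), norm_nonneg (rhoK z v),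
      norm_nonneg (rhoK v u), mul_le_mul h₁ h₂ (by positivity) (by positivity)]
  calc ‖(1/2 : ℂ) * ∑ j, (z.1 j - v.1 j) * (conj (v.1 j) - conj (u.1 j))‖
      ≤ 1/2 * S := by rw [norm_mul]; norm_num [hsum]
    _ ≤ ‖rhoK z v‖ + ‖rhoK v u‖ := by linarith

lemma norm_rhoK_triangle (hz : z ∈ TB n) (hu : u ∈ TB n) (hv : v ∈ TB n) :
    ‖rhoK z u‖ ≤ 2 * (‖rhoK z v‖ + ‖rhoK v u‖) + rhoR v := by
  have hρ : ‖(rhoR v : ℂ)‖ = rhoR v := Complex.norm_of_nonneg (rhoR_pos hv).le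
  rw [rhoK_three_point z u v]
  have := norm_add_le (rhoK z v + rhoK v u - rhoR v)
    ((1/2 : ℂ) * ∑ j, (z.1 j - v.1 j) * (conj (v.1 j) - conj (u.1 j)))
  have := norm_sub_le (rhoK z v + rhoK v u) (rhoR v)
  have := norm_add_le (rhoK z v) (rhoK v u)
  have := norm_cross_term_le hz hu hv
  linarith

lemma norm_rhoK_le_two_mul_rhoR_of_sq_le {K : ℝ} (hu : u ∈ TB n) (hv : v ∈ TB n)
    (h : ‖rhoK u v‖ ^ 2 ≤ K * (rhoR u * rhoR v)) : ‖rhoK u v‖ ≤ 2 * K * rhoR v := by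
  have hu₂ := rhoR_le_two_mul_norm_rhoK u hv
  have hu₀ := rhoR_pos hu
  have hv₀ := rhoR_pos hv
  have hK : 0 ≤ K := by nlinarith [sq_nonneg ‖rhoK u v‖, mul_pos hu₀ hv₀]
  nlinarith [mul_le_mul_of_nonneg_left hu₂ (mul_nonneg hK hv₀.le)]

lemma norm_rhoK_le_mul_of_sq_le {K : ℝ} (hz : z ∈ TB n) (hu : u ∈ TB n) (hv : v ∈ TB n)
    (h : ‖rhoK u v‖ ^ 2 ≤ K * (rhoR u * rhoR v)) : ‖rhoK z u‖ ≤ (4 + 8 * K) * ‖rhoK z v‖ := by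
  have hvu := norm_rhoK_le_two_mul_rhoR_of_sq_le hu hv h
  have hv₂ := rhoR_le_two_mul_norm_rhoK v hz
  have hK : 0 ≤ K := by nlinarith [norm_nonneg (rhoK u v), rhoR_pos hv]
  rw [norm_rhoK_comm u v] at hvu
  rw [norm_rhoK_comm v z] at hv₂
  nlinarith [norm_rhoK_triangle hz hu hv, mul_le_mul_of_nonneg_left hv₂ hK]

end Tube

lemma one_div_one_sub_sq_lt_cosh_sq {x r : ℝ} (hx₀ : 0 ≤ x) (hx₁ : x < 1) (h : artanh x < r) :
    1 / (1 - x ^ 2) < Real.cosh r ^ 2 := by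
  have hx : x ∈ Ioo (-1) 1 := ⟨by linarith, hx₁⟩
  have hlt : Real.artanh x < r := by
    rw [Real.artanh_eq_half_log (Ioo_subset_Icc_self hx)]; exact h
  have hcosh : Real.cosh (Real.artanh x) < Real.cosh r := by
    rw [Real.cosh_lt_cosh, abs_of_nonneg (Real.artanh_nonneg hx₀)]
    exact hlt.trans_le (le_abs_self r)
  have := pow_lt_pow_left₀ hcosh (Real.cosh_pos _).le two_ne_zero
  rwa [Real.cosh_artanh hx, div_pow, one_pow, Real.sq_sqrt (by nlinarith)] at this

lemma sq_norm_rhoK_lt_of_betaB_lt {n : ℕ} {u v : TubeC n} {r : ℝ} (hu : u ∈ TB n)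
    (hv : v ∈ TB n) (h : betaB u v < r) :
    ‖rhoK u v‖ ^ 2 < Real.cosh r ^ 2 * (rhoR u * rhoR v) := by
  have hP : 0 < rhoR u * rhoR v := mul_pos (rhoR_pos hu) (rhoR_pos hv)
  have hle := rhoR_mul_rhoR_le_sq_norm_rhoK hu hv
  have hN : 0 < ‖rhoK u v‖ ^ 2 := hP.trans_le hle
  set t := rhoR u * rhoR v / ‖rhoK u v‖ ^ 2
  have ht₀ : 0 < t := div_pos hP hN
  have ht₁ : t ≤ 1 := (div_le_one hN).2 hle
  have hx : √(1 - t) ^ 2 = 1 - t := Real.sq_sqrt (by linarith)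
  have key := one_div_one_sub_sq_lt_cosh_sq (Real.sqrt_nonneg _)
    ((Real.sqrt_lt' one_pos).2 (by linarith)) h
  rwa [hx, sub_sub_cancel, one_div_div, div_lt_iff₀ hP] at key

lemma betaB_comm {n : ℕ} (z w : TubeC n) : betaB z w = betaB w z := by
  rw [betaB, betaB, norm_rhoK_comm, mul_comm]

theorem stmt_7_general (n : ℕ) (r : ℝ) :
    ∃ C : ℝ, 1 ≤ C ∧ ∀ z ∈ TB n, ∀ u ∈ TB n, ∀ v ∈ TB n, betaB u v < r →
      C⁻¹ * ‖rhoK z v‖ ≤ ‖rhoK z u‖ ∧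
      ‖rhoK z u‖ ≤ C * ‖rhoK z v‖ := by
  refine ⟨4 + 8 * Real.cosh r ^ 2, by nlinarith [sq_nonneg (Real.cosh r)], ?_⟩
  intro z hz u hu v hv huv
  have hvu : betaB v u < r := betaB_comm u v ▸ huv
  refine ⟨(inv_mul_le_iff₀ (by positivity)).2 ?_, ?_⟩
  · exact norm_rhoK_le_mul_of_sq_le hz hv hu (sq_norm_rhoK_lt_of_betaB_lt hv hu hvu).le
  · exact norm_rhoK_le_mul_of_sq_le hz hu hv (sq_norm_rhoK_lt_of_betaB_lt hu hv huv).le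

/-- |ρ(z,u)| ≃ |ρ(z,v)| when β(u,v) < r. -/
theorem stmt_7 (n : ℕ) (r : ℝ) (hr : 0 < r) :
    ∃ C : ℝ, 1 ≤ C ∧ ∀ z ∈ TB n, ∀ u ∈ TB n, ∀ v ∈ TB n, betaB u v < r →
      C⁻¹ * ‖rhoK z v‖ ≤ ‖rhoK z u‖ ∧
      ‖rhoK z u‖ ≤ C * ‖rhoK z v‖ :=
  stmt_7_general n r
end
end
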